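/- arXiv:0903.1348 — 3 statements merged into one kernel-verified Lean document; each statement's English description precedes it below -/
import Mathlib

section
/- Let θ ∈ (0, π/2], let f : ℝ → ℝ³ be a twice continuously differentiable curve with ‖f(v)‖ = 1 and ‖f'(v)‖ = 1 for all v ∈ ℝ, and for u > 0 set ξ(u) = cot θ · log u and r(u,v) = u·sin θ·(cos ξ(u) · f(v) + sin ξ(u) · (f(v) × f'(v))). Define N(u,v) = cos(ξ(u) − θ) · f(v) + sin(ξ(u) − θ) · (f(v) × f'(v)). Then for every u > 0 and v ∈ ℝ: ‖N(u,v)‖ = 1, N(u,v) is orthogonal to ∂r/∂u(u,v) and to ∂r/∂v(u,v), and ⟨N(u,v), r(u,v)⟩ = cos θ · ‖r(u,v)‖. In other words, the surface parametrized by r is a constant slope surface: its unit normal makes the constant angle θ with the position vector. -/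
open Real RealInnerProductSpace

/-- The cross product on Euclidean 3-space. -/
noncomputable def cross3 (a b : EuclideanSpace ℝ (Fin 3)) : EuclideanSpace ℝ (Fin 3) :=
  WithLp.toLp 2 ![a 1 * b 2 - a 2 * b 1, a 2 * b 0 - a 0 * b 2, a 0 * b 1 - a 1 * b 0]

/-!
Put `a = f v` and `g = f v × f' v`. For a unit speed spherical curve `f v, f' v, g` is an
orthonormal frame, and `r`, `N` lie on the great circle `e(α) = cos α • a + sin α • g`:
`r = u sin θ • e(ξ)` and `N = e(ξ - θ)` with `ξ = cot θ log u`. Since `⟪e α, e β⟫ = cos (α - β)`,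
`N` is a unit vector at angle `θ` to `r`. Along `u`, `e(ξ)` turns with angular speed `cot θ / u`,
so `∂r/∂u = sin θ • e(ξ) + cos θ • e(ξ + π/2)`, which is orthogonal to `e(ξ - θ)`. Along `v`,
constant norms and `⟪f, g⟫ = 0` make `f'` and `g'` orthogonal to `f` and `g` once `⟪f', g⟫ = 0`,
so `∂r/∂v` is orthogonal to the whole plane containing `N`.
-/

section GreatCircle

variable {E : Type*} [NormedAddCommGroup E] [InnerProductSpace ℝ E]

noncomputable def greatCircle (a g : E) (α : ℝ) : E := cos α • a + sin α • g

variable {a g : E}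

lemma inner_greatCircle (ha : ‖a‖ = 1) (hg : ‖g‖ = 1) (hag : ⟪a, g⟫ = 0) (α β : ℝ) :
    ⟪greatCircle a g α, greatCircle a g β⟫ = cos (α - β) := by
  have hga : ⟪g, a⟫ = 0 := by rw [real_inner_comm, hag]
  simp only [greatCircle, inner_add_left, inner_add_right, real_inner_smul_left,
    real_inner_smul_right, real_inner_self_eq_norm_sq, ha, hg, hag, hga, cos_sub]
  ring

lemma norm_greatCircle (ha : ‖a‖ = 1) (hg : ‖g‖ = 1) (hag : ⟪a, g⟫ = 0) (α : ℝ) :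
    ‖greatCircle a g α‖ = 1 := by
  rw [norm_eq_sqrt_real_inner, inner_greatCircle ha hg hag, sub_self, cos_zero, sqrt_one]

lemma hasDerivAt_greatCircle (a g : E) (α : ℝ) :
    HasDerivAt (greatCircle a g) (greatCircle a g (α + π / 2)) α := by
  have := ((hasDerivAt_cos α).smul_const a).add ((hasDerivAt_sin α).smul_const g)
  exact this.congr_deriv (by rw [greatCircle, cos_add_pi_div_two, sin_add_pi_div_two, neg_smul])

lemma inner_greatCircle_deriv_logSpiral (ha : ‖a‖ = 1) (hg : ‖g‖ = 1) (hag : ⟪a, g⟫ = 0)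
    {θ u : ℝ} (hu : 0 < u) :
    ⟪greatCircle a g (cot θ * log u - θ),
      deriv (fun u' => (u' * sin θ) • greatCircle a g (cot θ * log u')) u⟫ = 0 := by
  have hξ : HasDerivAt (fun u' => cot θ * log u') (cot θ * u⁻¹) u :=
    (hasDerivAt_log hu.ne').const_mul _
  have hr : HasDerivAt (fun u' => (u' * sin θ) • greatCircle a g (cot θ * log u')) _ u :=
    ((hasDerivAt_id u).mul_const (sin θ)).smul ((hasDerivAt_greatCircle a g _).scomp u hξ)
  rw [hr.deriv]
  simp only [inner_add_right, real_inner_smul_right, inner_greatCircle ha hg hag, id]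
  set ξ := cot θ * log u
  rw [show ξ - θ - (ξ + π / 2) = -(θ + π / 2) by ring, sub_sub_cancel_left, cos_neg, cos_neg,
    cos_add_pi_div_two]
  rcases eq_or_ne (sin θ) 0 with hθ | hθ
  · -- `cot θ` is a junk `0` here, but so is the radius `u sin θ`
    simp [hθ]
  · rw [cot_eq_cos_div_sin]
    field_simp
    ring

end GreatCircle

section Cross

open Matrix

lemma cross3_eq (a b : EuclideanSpace ℝ (Fin 3)) :
    cross3 a b = WithLp.toLp 2 (WithLp.ofLp a ⨯₃ WithLp.ofLp b) :=
  rfl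

lemma inner_self_cross3 (a b : EuclideanSpace ℝ (Fin 3)) : ⟪a, cross3 a b⟫ = 0 := by
  rw [cross3_eq, EuclideanSpace.inner_eq_star_dotProduct, star_trivial, dotProduct_comm]
  exact dot_self_cross _ _

lemma inner_cross3_self (a b : EuclideanSpace ℝ (Fin 3)) : ⟪b, cross3 a b⟫ = 0 := by
  rw [cross3_eq, EuclideanSpace.inner_eq_star_dotProduct, star_trivial, dotProduct_comm]
  exact dot_cross_self _ _

lemma norm_cross3 {a b : EuclideanSpace ℝ (Fin 3)} (ha : ‖a‖ = 1) (hb : ‖b‖ = 1)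
    (hab : ⟪a, b⟫ = 0) : ‖cross3 a b‖ = 1 := by
  have key : ⟪cross3 a b, cross3 a b⟫ = ⟪a, a⟫ * ⟪b, b⟫ - ⟪a, b⟫ * ⟪b, a⟫ := by
    simp only [cross3_eq, EuclideanSpace.inner_eq_star_dotProduct, star_trivial]
    rw [cross_dot_cross]
    simp only [dotProduct_comm]
  rw [norm_eq_sqrt_real_inner, key, real_inner_comm a b, hab, real_inner_self_eq_norm_sq,
    real_inner_self_eq_norm_sq, ha, hb]
  norm_num

lemma isBilinearMap_cross3 : IsBilinearMap ℝ cross3 := by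
  refine ⟨?_, ?_, ?_, ?_⟩ <;> intros <;> simp [cross3_eq]

lemma DifferentiableAt.cross3 {p q : ℝ → EuclideanSpace ℝ (Fin 3)} {t : ℝ}
    (hp : DifferentiableAt ℝ p t) (hq : DifferentiableAt ℝ q t) :
    DifferentiableAt ℝ (fun s => cross3 (p s) (q s)) t :=
  (isBilinearMap_cross3.toContinuousBilinearMap.differentiableAt.comp t hp).clm_apply hq

end Cross

section Calculus

variable {E : Type*} [NormedAddCommGroup E] [InnerProductSpace ℝ E] {F G : ℝ → E} {t : ℝ}

lemma inner_deriv_add_inner_deriv_eq_zero {c : ℝ} (hF : DifferentiableAt ℝ F t)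
    (hG : DifferentiableAt ℝ G t) (h : ∀ s, ⟪F s, G s⟫ = c) :
    ⟪deriv F t, G t⟫ + ⟪F t, deriv G t⟫ = 0 := by
  have hc : HasDerivAt (fun s => ⟪F s, G s⟫) 0 t := by
    simpa only [h] using hasDerivAt_const t c
  rw [add_comm]
  exact (hF.hasDerivAt.inner ℝ hG.hasDerivAt).unique hc

lemma inner_deriv_eq_zero_of_norm_eq_const {c : ℝ} (hF : DifferentiableAt ℝ F t)
    (h : ∀ s, ‖F s‖ = c) : ⟪F t, deriv F t⟫ = 0 := by
  have := inner_deriv_add_inner_deriv_eq_zero hF hF (c := c ^ 2) fun s => by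
    rw [real_inner_self_eq_norm_sq, h]
  rw [real_inner_comm] at this
  linarith

lemma inner_greatCircle_deriv_greatCircle {c d : ℝ} (hF : DifferentiableAt ℝ F t)
    (hG : DifferentiableAt ℝ G t) (hFc : ∀ s, ‖F s‖ = c) (hGd : ∀ s, ‖G s‖ = d)
    (hFG : ∀ s, ⟪F s, G s⟫ = 0) (hF'G : ⟪deriv F t, G t⟫ = 0) (α β : ℝ) :
    ⟪greatCircle (F t) (G t) β, deriv (fun s => greatCircle (F s) (G s) α) t⟫ = 0 := by
  have hFF' := inner_deriv_eq_zero_of_norm_eq_const hF hFc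
  have hGG' := inner_deriv_eq_zero_of_norm_eq_const hG hGd
  have hFG' : ⟪F t, deriv G t⟫ = 0 := by
    linarith [inner_deriv_add_inner_deriv_eq_zero hF hG hFG]
  have hGF' : ⟪G t, deriv F t⟫ = 0 := by rw [real_inner_comm, hF'G]
  have hD : HasDerivAt (fun s => greatCircle (F s) (G s) α) _ t :=
    (hF.hasDerivAt.const_smul (cos α)).add (hG.hasDerivAt.const_smul (sin α))
  rw [hD.deriv]
  simp only [greatCircle, inner_add_left, inner_add_right, real_inner_smul_left,
    real_inner_smul_right, hFF', hGG', hFG', hGF']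
  ring

end Calculus

/-- The surface `r(u,v) = u sin θ (cos ξ(u) f(v) + sin ξ(u) f(v) × f'(v))`,
`ξ(u) = cot θ · log u`, built from a unit speed spherical curve `f`, is a constant
slope surface: its unit normal `N` makes the constant angle `θ` with the position vector. -/
theorem constant_slope_surface (θ : ℝ) (hθ : θ ∈ Set.Ioc 0 (π / 2))
    (f : ℝ → EuclideanSpace ℝ (Fin 3)) (hf : ContDiff ℝ 2 f)
    (hf1 : ∀ v, ‖f v‖ = 1) (hf'1 : ∀ v, ‖deriv f v‖ = 1)
    (r N : ℝ → ℝ → EuclideanSpace ℝ (Fin 3))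
    (hr : ∀ u v, 0 < u → r u v = (u * Real.sin θ) •
      (Real.cos (Real.cot θ * Real.log u) • f v +
       Real.sin (Real.cot θ * Real.log u) • cross3 (f v) (deriv f v)))
    (hN : ∀ u v, 0 < u → N u v =
      Real.cos (Real.cot θ * Real.log u - θ) • f v +
      Real.sin (Real.cot θ * Real.log u - θ) • cross3 (f v) (deriv f v)) :
    ∀ u v, 0 < u →
      ‖N u v‖ = 1 ∧
      ⟪N u v, deriv (fun u' => r u' v) u⟫ = (0 : ℝ) ∧
      ⟪N u v, deriv (fun v' => r u v') v⟫ = (0 : ℝ) ∧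
      ⟪N u v, r u v⟫ = Real.cos θ * ‖r u v‖ := by
  intro u v hu
  have hsin : 0 < sin θ := sin_pos_of_pos_of_lt_pi hθ.1 (by linarith [hθ.2, pi_pos])
  have hfd : Differentiable ℝ f := hf.differentiable two_ne_zero
  have hf'd : Differentiable ℝ (deriv f) := (hf.deriv' (n := 1)).differentiable one_ne_zero
  set g := fun t => cross3 (f t) (deriv f t)
  have hff' (t : ℝ) : ⟪f t, deriv f t⟫ = 0 := inner_deriv_eq_zero_of_norm_eq_const (hfd t) hf1
  have hg1 (t : ℝ) : ‖g t‖ = 1 := norm_cross3 (hf1 t) (hf'1 t) (hff' t)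
  have hfg (t : ℝ) : ⟪f t, g t⟫ = 0 := inner_self_cross3 _ _
  have hru : (fun u' => r u' v) =ᶠ[nhds u]
      fun u' => (u' * sin θ) • greatCircle (f v) (g v) (cot θ * log u') :=
    Filter.eventuallyEq_of_mem (Ioi_mem_nhds hu) fun u' hu' => hr u' v hu'
  have hrv : (fun v' => r u v') =
      fun v' => (u * sin θ) • greatCircle (f v') (g v') (cot θ * log u) :=
    funext fun v' => hr u v' hu
  have hNuv : N u v = greatCircle (f v) (g v) (cot θ * log u - θ) := hN u v hu
  have hruv : r u v = (u * sin θ) • greatCircle (f v) (g v) (cot θ * log u) := hr u v hu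
  refine ⟨?_, ?_, ?_, ?_⟩
  · rw [hNuv, norm_greatCircle (hf1 v) (hg1 v) (hfg v)]
  · rw [hNuv, hru.deriv_eq]
    exact inner_greatCircle_deriv_logSpiral (hf1 v) (hg1 v) (hfg v) hu
  · have hgd : DifferentiableAt ℝ g v := (hfd v).cross3 (hf'd v)
    have hD : DifferentiableAt ℝ (fun v' => greatCircle (f v') (g v') (cot θ * log u)) v := by
      unfold greatCircle; fun_prop
    rw [hNuv, hrv, deriv_fun_const_smul _ hD, inner_smul_right,
      inner_greatCircle_deriv_greatCircle (hfd v) hgd hf1 hg1 hfg (inner_cross3_self _ _), mul_zero]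
  · rw [hNuv, hruv, real_inner_smul_right, norm_smul, inner_greatCircle (hf1 v) (hg1 v) (hfg v),
      norm_greatCircle (hf1 v) (hg1 v) (hfg v), sub_sub_cancel_left, cos_neg,
      norm_of_nonneg (mul_pos hu hsin).le]
    ring
end

section
/- Let θ ∈ (0, π/2], let f : ℝ → ℝ³ be a twice continuously differentiable curve with ‖f(v)‖ = 1 and ‖f'(v)‖ = 1 for all v ∈ ℝ, and for u > 0 set ξ(u) = cot θ · log u and r(u,v) = u·sin θ·(cos ξ(u) · f(v) + sin ξ(u) · (f(v) × f'(v))). Then for every u > 0 and v ∈ ℝ the partial derivative of r with respect to v equals u·sin θ·(cos ξ(u) − κ_g(v)·sin ξ(u)) · f'(v), where κ_g(v) = ⟨f''(v), f(v) × f'(v)⟩; in particular ∂r/∂v(u,v) is a scalar multiple of f'(v). -/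
/-!
Along a unit-speed curve `f` on the unit sphere, `f ⟂ f'` and `f'' ⟂ f'`. Differentiating the
normal `f × f'` gives `f' × f' + f × f'' = f × f''`, and since `f` and `f''` both lie in the
plane `f'^⊥`, their cross product is a multiple of `f'`, namely `-κ_g f'`. Hence `∂r/∂v` is
`u sin θ (cos ξ - κ_g sin ξ) f'`.
-/

open Real RealInnerProductSpace

open Matrix WithLp

lemma cross3_eq_crossProduct (a b : EuclideanSpace ℝ (Fin 3)) :
    cross3 a b = toLp 2 (ofLp a ⨯₃ ofLp b) := by
  ext i; fin_cases i <;> simp [cross3, cross_apply]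

lemma isBilinearMap_cross3_s4 : IsBilinearMap ℝ cross3 where
  add_left x₁ x₂ y := by simp [cross3_eq_crossProduct]
  smul_left c x y := by simp [cross3_eq_crossProduct]
  add_right x y₁ y₂ := by simp [cross3_eq_crossProduct]
  smul_right c x y := by simp [cross3_eq_crossProduct]

theorem HasDerivAt.cross3 {f g : ℝ → EuclideanSpace ℝ (Fin 3)} {f' g' : EuclideanSpace ℝ (Fin 3)}
    {x : ℝ} (hf : HasDerivAt f f' x) (hg : HasDerivAt g g' x) :
    HasDerivAt (fun t => cross3 (f t) (g t)) (cross3 f' (g x) + cross3 (f x) g') x :=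
  (isBilinearMap_cross3_s4.toContinuousBilinearMap.hasFDerivAt.comp_hasDerivAt x hf).clm_apply hg

theorem eq_dotProduct_smul_of_cross_eq_zero {R : Type*} [CommRing R] {b x : Fin 3 → R}
    (hb : b ⬝ᵥ b = 1) (hbx : b ⨯₃ x = 0) : x = (b ⬝ᵥ x) • b := by
  have h := cross_cross_eq_smul_sub_smul' b b x
  rw [hbx, map_zero, hb, one_smul] at h
  exact (sub_eq_zero.mp h.symm).symm

theorem cross_eq_neg_dotProduct_smul {R : Type*} [CommRing R] {a b c : Fin 3 → R}
    (hb : b ⬝ᵥ b = 1) (hab : a ⬝ᵥ b = 0) (hbc : b ⬝ᵥ c = 0) :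
    a ⨯₃ c = -(c ⬝ᵥ a ⨯₃ b) • b := by
  have hparallel : b ⨯₃ (a ⨯₃ c) = 0 := by
    rw [cross_cross_eq_smul_sub_smul', hbc, hab, zero_smul, zero_smul, sub_zero]
  have htriple : b ⬝ᵥ a ⨯₃ c = -(c ⬝ᵥ a ⨯₃ b) := by
    rw [triple_product_permutation, triple_product_permutation, ← cross_anticomm, dotProduct_neg]
  rw [← htriple]
  exact eq_dotProduct_smul_of_cross_eq_zero hb hparallel

lemma cross3_eq_neg_inner_smul {a b c : EuclideanSpace ℝ (Fin 3)}
    (hb : ⟪b, b⟫ = 1) (hab : ⟪a, b⟫ = 0) (hbc : ⟪b, c⟫ = 0) :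
    cross3 a c = (-⟪c, cross3 a b⟫) • b := by
  simp only [EuclideanSpace.inner_eq_star_dotProduct, star_trivial] at hb hab hbc ⊢
  rw [cross3_eq_crossProduct, cross3_eq_crossProduct, cross_eq_neg_dotProduct_smul hb
    (by rwa [dotProduct_comm]) (by rwa [dotProduct_comm]), dotProduct_comm]
  rfl

theorem inner_eq_zero_of_hasDerivAt_of_norm_eq {F : Type*} [NormedAddCommGroup F]
    [InnerProductSpace ℝ F] {f : ℝ → F} {f' : F} {c : ℝ} {x : ℝ}
    (hf : HasDerivAt f f' x) (hc : ∀ t, ‖f t‖ = c) : ⟪f x, f'⟫ = 0 := by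
  have hconst : HasDerivAt (‖f ·‖ ^ 2) 0 x := by
    simpa only [hc] using hasDerivAt_const x (c ^ 2)
  simpa using hf.norm_sq.unique hconst

theorem hasDerivAt_cross3_self_deriv {f : ℝ → EuclideanSpace ℝ (Fin 3)}
    (hf : Differentiable ℝ f) (hf' : Differentiable ℝ (deriv f))
    (hf1 : ∀ v, ‖f v‖ = 1) (hf'1 : ∀ v, ‖deriv f v‖ = 1) (v : ℝ) :
    HasDerivAt (fun t => cross3 (f t) (deriv f t))
      ((-⟪deriv (deriv f) v, cross3 (f v) (deriv f v)⟫) • deriv f v) v := by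
  have hd : HasDerivAt f (deriv f v) v := (hf v).hasDerivAt
  have hdd : HasDerivAt (deriv f) (deriv (deriv f) v) v := (hf' v).hasDerivAt
  convert hd.cross3 hdd using 1
  rw [cross3_eq_crossProduct (deriv f v), cross_self, toLp_zero, zero_add,
    cross3_eq_neg_inner_smul (by rw [real_inner_self_eq_norm_sq, hf'1, one_pow])
      (inner_eq_zero_of_hasDerivAt_of_norm_eq hd hf1)
      (inner_eq_zero_of_hasDerivAt_of_norm_eq hdd hf'1)]

theorem deriv_v_constant_slope_general (θ : ℝ)
    (f : ℝ → EuclideanSpace ℝ (Fin 3)) (hf : ContDiff ℝ 2 f)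
    (hf1 : ∀ v, ‖f v‖ = 1) (hf'1 : ∀ v, ‖deriv f v‖ = 1)
    (r : ℝ → ℝ → EuclideanSpace ℝ (Fin 3))
    (hr : ∀ u v, 0 < u → r u v = (u * Real.sin θ) •
      (Real.cos (Real.cot θ * Real.log u) • f v +
       Real.sin (Real.cot θ * Real.log u) • cross3 (f v) (deriv f v)))
    :
    ∀ u v, 0 < u →
      deriv (fun v' => r u v') v =
        (u * Real.sin θ * (Real.cos (Real.cot θ * Real.log u) -
          ⟪deriv (deriv f) v, cross3 (f v) (deriv f v)⟫ *
            Real.sin (Real.cot θ * Real.log u))) • deriv f v := by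
  intro u v hu
  set ξ := Real.cot θ * Real.log u
  have hf_diff : Differentiable ℝ f := hf.differentiable two_ne_zero
  have hr_u : (fun v' => r u v') = fun v' => (u * Real.sin θ) •
      (Real.cos ξ • f v' + Real.sin ξ • cross3 (f v') (deriv f v')) :=
    funext (hr u · hu)
  have hframe := hasDerivAt_cross3_self_deriv hf_diff hf.differentiable_deriv_two hf1 hf'1 v
  rw [hr_u]
  refine HasDerivAt.deriv ?_
  convert (((hf_diff v).hasDerivAt.const_smul (Real.cos ξ)).add
    (hframe.const_smul (Real.sin ξ))).const_smul (u * Real.sin θ) using 1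
  · rfl
  · module

/-- `∂r/∂v = u sin θ (cos ξ − κ_g sin ξ) f'(v)`, where
`κ_g(v) = ⟨f''(v), f(v) × f'(v)⟩`; in particular `∂r/∂v` is a multiple of `f'(v)`. -/
theorem deriv_v_constant_slope (θ : ℝ) (hθ : θ ∈ Set.Ioc 0 (π / 2))
    (f : ℝ → EuclideanSpace ℝ (Fin 3)) (hf : ContDiff ℝ 2 f)
    (hf1 : ∀ v, ‖f v‖ = 1) (hf'1 : ∀ v, ‖deriv f v‖ = 1)
    (r : ℝ → ℝ → EuclideanSpace ℝ (Fin 3))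
    (hr : ∀ u v, 0 < u → r u v = (u * Real.sin θ) •
      (Real.cos (Real.cot θ * Real.log u) • f v +
       Real.sin (Real.cot θ * Real.log u) • cross3 (f v) (deriv f v)))
    :
    ∀ u v, 0 < u →
      deriv (fun v' => r u v') v =
        (u * Real.sin θ * (Real.cos (Real.cot θ * Real.log u) -
          ⟪deriv (deriv f) v, cross3 (f v) (deriv f v)⟫ *
            Real.sin (Real.cot θ * Real.log u))) • deriv f v :=
  deriv_v_constant_slope_general θ f hf hf1 hf'1 r hr
end

section
/- Let θ ∈ (0, π/2], let f : ℝ → ℝ³ be a twice continuously differentiable curve with ‖f(v)‖ = 1 and ‖f'(v)‖ = 1 for all v ∈ ℝ, and for u > 0 set ξ(u) = cot θ · log u and r(u,v) = u·sin θ·(cos ξ(u) · f(v) + sin ξ(u) · (f(v) × f'(v))). Define N(u,v) = cos(ξ(u) − θ) · f(v) + sin(ξ(u) − θ) · (f(v) × f'(v)). Then the position vector decomposes as r(u,v) = u·sin²θ · ∂r/∂u(u,v) + u·sin θ·cos θ · N(u,v) for all u > 0 and v ∈ ℝ. -/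
open Real RealInnerProductSpace

/-!
With `a = f v`, `b = f v × f' v`, `R t = cos t • a + sin t • b` and `ξ = cot θ · log u`, each
curve `u ↦ r u v` is the logarithmic spiral `u sin θ · R ξ`. Its `u`-derivative is
`sin θ · (R ξ + cot θ · R' ξ)`, while `N = R(ξ - θ) = cos θ · R ξ - sin θ · R' ξ`; in the
combination `u sin²θ · ∂r/∂u + u sin θ cos θ · N` the `R'` terms cancel because
`sin²θ · cot θ = sin θ cos θ`, and the `R` terms add up to `u sin θ (sin²θ + cos²θ) · R ξ = r`.
-/

/-- Holds for every `θ`: where `sin θ = 0`, Mathlib's `cot θ = cos θ / sin θ` is `0`. -/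
theorem Real.sin_sq_mul_cot (θ : ℝ) : sin θ ^ 2 * cot θ = sin θ * cos θ := by
  rw [cot_eq_cos_div_sin]
  by_cases hs : sin θ = 0
  · simp [hs]
  · field_simp

section TrigComb

variable {E : Type*} [NormedAddCommGroup E] [NormedSpace ℝ E]

noncomputable def trigComb (a b : E) (t : ℝ) : E := cos t • a + sin t • b

theorem hasDerivAt_trigComb (a b : E) (t : ℝ) :
    HasDerivAt (trigComb a b) (trigComb b (-a) t) t := by
  refine (((hasDerivAt_cos t).smul_const a).add ((hasDerivAt_sin t).smul_const b)).congr_deriv ?_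
  simp only [trigComb, smul_neg, neg_smul]
  abel

theorem trigComb_sub (a b : E) (ξ θ : ℝ) :
    trigComb a b (ξ - θ) = cos θ • trigComb a b ξ - sin θ • trigComb b (-a) ξ := by
  simp only [trigComb, cos_sub, sin_sub]
  module

theorem hasDerivAt_smul_trigComb_log (a b : E) (s k : ℝ) {u : ℝ} (hu : u ≠ 0) :
    HasDerivAt (fun x => (x * s) • trigComb a b (k * log x))
      (s • (trigComb a b (k * log u) + k • trigComb b (-a) (k * log u))) u := by
  have hlog : HasDerivAt (fun x => k * log x) (k * u⁻¹) u := (hasDerivAt_log hu).const_mul k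
  refine (((hasDerivAt_id u).mul_const s).smul
    ((hasDerivAt_trigComb a b (k * log u)).scomp u hlog)).congr_deriv ?_
  simp only [id, Function.comp_apply]
  match_scalars <;> field_simp

end TrigComb

theorem position_decomposition_constant_slope_general (θ : ℝ)
    (f : ℝ → EuclideanSpace ℝ (Fin 3))
    (r : ℝ → ℝ → EuclideanSpace ℝ (Fin 3))
    (hr : ∀ u v, 0 < u → r u v = (u * Real.sin θ) •
      (Real.cos (Real.cot θ * Real.log u) • f v +
       Real.sin (Real.cot θ * Real.log u) • cross3 (f v) (deriv f v)))
    (N : ℝ → ℝ → EuclideanSpace ℝ (Fin 3))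
    (hN : ∀ u v, 0 < u → N u v =
      Real.cos (Real.cot θ * Real.log u - θ) • f v +
      Real.sin (Real.cot θ * Real.log u - θ) • cross3 (f v) (deriv f v)) :
    ∀ u v, 0 < u →
      r u v = (u * Real.sin θ ^ 2) • deriv (fun u' => r u' v) u +
        (u * Real.sin θ * Real.cos θ) • N u v := by
  intro u v hu
  set R := trigComb (f v) (cross3 (f v) (deriv f v))
  set R' := trigComb (cross3 (f v) (deriv f v)) (-f v)
  set ξ := cot θ * log u
  have hr_eq : (fun x => r x v) =ᶠ[nhds u] fun x => (x * sin θ) • R (cot θ * log x) := by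
    filter_upwards [Ioi_mem_nhds hu] with x hx
    exact hr x v hx
  have hderiv : deriv (fun x => r x v) u = sin θ • (R ξ + cot θ • R' ξ) := by
    rw [hr_eq.deriv_eq]
    exact (hasDerivAt_smul_trigComb_log _ _ _ _ hu.ne').deriv
  have hN_eq : N u v = cos θ • R ξ - sin θ • R' ξ := by
    rw [hN u v hu]
    exact trigComb_sub _ _ ξ θ
  rw [hr u v hu, hderiv, hN_eq]
  change (u * sin θ) • R ξ = _
  match_scalars
  · linear_combination (-(u * sin θ)) * sin_sq_add_cos_sq θ
  · linear_combination (-u * sin θ) * sin_sq_mul_cot θ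

/-- The position vector decomposes as
`r = u sin²θ · ∂r/∂u + u sin θ cos θ · N`. -/
theorem position_decomposition_constant_slope (θ : ℝ) (hθ : θ ∈ Set.Ioc 0 (π / 2))
    (f : ℝ → EuclideanSpace ℝ (Fin 3)) (hf : ContDiff ℝ 2 f)
    (hf1 : ∀ v, ‖f v‖ = 1) (hf'1 : ∀ v, ‖deriv f v‖ = 1)
    (r : ℝ → ℝ → EuclideanSpace ℝ (Fin 3))
    (hr : ∀ u v, 0 < u → r u v = (u * Real.sin θ) •
      (Real.cos (Real.cot θ * Real.log u) • f v +
       Real.sin (Real.cot θ * Real.log u) • cross3 (f v) (deriv f v)))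
    (N : ℝ → ℝ → EuclideanSpace ℝ (Fin 3))
    (hN : ∀ u v, 0 < u → N u v =
      Real.cos (Real.cot θ * Real.log u - θ) • f v +
      Real.sin (Real.cot θ * Real.log u - θ) • cross3 (f v) (deriv f v)) :
    ∀ u v, 0 < u →
      r u v = (u * Real.sin θ ^ 2) • deriv (fun u' => r u' v) u +
        (u * Real.sin θ * Real.cos θ) • N u v :=
  position_decomposition_constant_slope_general θ f r hr N hN
end
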